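/- Let G be the weak subhypergraph of H induced by a vertex set V' ⊆ V(H) (so E(G) = {e ∩ V' : e ∈ E(H), e ∩ V' ≠ ∅}). If |E(G)| = |E(H)| and every edge of H intersects V' in at least two vertices, then b(G) ≤ b(H). -/

import Mathlib

/-!
Play an optimal burning sequence of `H` in `G`, replacing each source that lies outside `V'` or
is already burned in `G` by an arbitrary unburned vertex of `G`. Since every edge `e` of `H`
leaves a non-singleton trace `e ∩ V'` among the edges of `G`, any vertex of `V'` that catches
fire in `H` also catches fire in `G` in the same round, so after `b(H)` rounds all of `V'` burns.
-/

open Finset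

/-- A hypergraph: a finite vertex set together with a finite set of edges,
each edge being a subset of the vertex set. -/
structure BurnHypergraph (α : Type*) [DecidableEq α] where
  verts : Finset α
  edges : Finset (Finset α)
  edges_sub : ∀ e ∈ edges, e ⊆ verts

namespace BurnHypergraph

variable {α : Type*} [DecidableEq α]

/-- `Burns H S v`: starting from the initially burned set `S`, the vertex `v`
eventually burns under the propagation rule: an unburned vertex `v` catches fire
when some non-singleton edge `e ∋ v` has all of `e \ {v}` burned. -/
inductive Burns (H : BurnHypergraph α) (S : Finset α) : α → Prop
  | init {v : α} : v ∈ S → Burns H S v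
  | prop {v : α} {e : Finset α} : v ∈ H.verts → e ∈ H.edges → 2 ≤ e.card → v ∈ e →
      (∀ u ∈ e, u ≠ v → Burns H S u) → Burns H S v

/-- A lazy burning set: a set of vertices whose propagation closure is all of `V(H)`. -/
def IsLazySet (H : BurnHypergraph α) (S : Finset α) : Prop :=
  S ⊆ H.verts ∧ ∀ v ∈ H.verts, H.Burns S v

/-- The lazy burning number: the minimum size of a lazy burning set. -/
noncomputable def lazyBurn (H : BurnHypergraph α) : ℕ :=
  sInf {n | ∃ S : Finset α, H.IsLazySet S ∧ S.card = n}

/-- One round of fire propagation applied to the burned set `F`. -/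
noncomputable def step (H : BurnHypergraph α) (F : Finset α) : Finset α :=
  F ∪ H.verts.filter (fun v => ∃ e ∈ H.edges, 2 ≤ e.card ∧ v ∈ e ∧ e \ {v} ⊆ F)

/-- The set of burned vertices after playing the sources `us` in order
(each round: propagation happens, and simultaneously the next source is burned). -/
noncomputable def state (H : BurnHypergraph α) (us : List α) : Finset α :=
  us.foldl (fun F u => insert u (H.step F)) ∅

/-- `us` is a burning sequence for `H`: each source is a vertex that was not burned
at the end of the previous round, and after the final round all of `V(H)` is burned. -/
def IsBurningSeq (H : BurnHypergraph α) (us : List α) : Prop :=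
  (∀ i : Fin us.length, us.get i ∈ H.verts ∧ us.get i ∉ H.state (us.take i.1)) ∧
  H.state us = H.verts

/-- The (round-based) burning number: the minimum length of a burning sequence. -/
noncomputable def burn (H : BurnHypergraph α) : ℕ :=
  sInf {n | ∃ us : List α, H.IsBurningSeq us ∧ us.length = n}

/-- An independent set of vertices: one containing no edge of `H`. -/
def IsIndep (H : BurnHypergraph α) (X : Finset α) : Prop :=
  X ⊆ H.verts ∧ ∀ e ∈ H.edges, ¬ e ⊆ X

/-- The independence number `α(H)`. -/
noncomputable def indepNum (H : BurnHypergraph α) : ℕ :=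
  sSup {n | ∃ X : Finset α, H.IsIndep X ∧ X.card = n}

/-- Two vertices are adjacent if they lie in a common edge. -/
def Adj (H : BurnHypergraph α) (u v : α) : Prop :=
  ∃ e ∈ H.edges, u ∈ e ∧ v ∈ e

/-- Two vertices are connected if they are joined by a path (alternating
vertices and edges). -/
def Conn (H : BurnHypergraph α) (u v : α) : Prop :=
  Relation.ReflTransGen H.Adj u v

/-- A hypergraph is connected if every two vertices are connected. -/
def IsConnected (H : BurnHypergraph α) : Prop :=
  ∀ u ∈ H.verts, ∀ v ∈ H.verts, H.Conn u v

/-- `G : Fin k → Hypergraph α` is the family of connected components of `H`: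
the vertex sets are nonempty, partition `V(H)`, each component carries exactly the
edges of `H` lying inside it, each component is connected, and components are
maximal with respect to connectivity. -/
def IsComponents (H : BurnHypergraph α) {k : ℕ} (G : Fin k → BurnHypergraph α) : Prop :=
  (∀ i, (G i).verts.Nonempty) ∧
  (∀ i, (G i).verts ⊆ H.verts) ∧
  (∀ i, (G i).edges = H.edges.filter (fun e => e ⊆ (G i).verts)) ∧
  (∀ v ∈ H.verts, ∃! i, v ∈ (G i).verts) ∧
  (∀ i, ∀ u ∈ (G i).verts, ∀ v ∈ (G i).verts, H.Conn u v) ∧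
  (∀ i, ∀ u ∈ (G i).verts, ∀ v ∈ H.verts, H.Conn u v → v ∈ (G i).verts)

end BurnHypergraph

namespace BurnHypergraph

variable {α : Type*} [DecidableEq α]

def IsLegalSeq (H : BurnHypergraph α) (us : List α) : Prop :=
  ∀ i : Fin us.length, us.get i ∈ H.verts ∧ us.get i ∉ H.state (us.take i.1)

variable {H G : BurnHypergraph α}

lemma subset_step (H : BurnHypergraph α) (F : Finset α) : F ⊆ H.step F :=
  subset_union_left

lemma step_subset_verts {F : Finset α} (h : F ⊆ H.verts) : H.step F ⊆ H.verts :=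
  union_subset h (filter_subset _ _)

lemma state_append_singleton (H : BurnHypergraph α) (us : List α) (v : α) :
    H.state (us ++ [v]) = insert v (H.step (H.state us)) := by
  simp [state, List.foldl_append]

lemma state_subset_verts {us : List α} (h : ∀ u ∈ us, u ∈ H.verts) :
    H.state us ⊆ H.verts := by
  induction us using List.reverseRecOn with
  | nil => exact empty_subset _
  | append_singleton us u ih =>
    simp only [List.mem_append, List.mem_singleton] at h
    rw [state_append_singleton]
    exact insert_subset (h u (Or.inr rfl)) (step_subset_verts (ih fun v hv => h v (Or.inl hv)))

lemma isLegalSeq_nil (H : BurnHypergraph α) : H.IsLegalSeq [] :=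
  fun i => i.elim0

lemma IsLegalSeq.mem_verts {us : List α} (h : H.IsLegalSeq us) {u : α} (hu : u ∈ us) :
    u ∈ H.verts := by
  obtain ⟨i, rfl⟩ := List.mem_iff_get.1 hu
  exact (h i).1

lemma IsLegalSeq.append_singleton {us : List α} {v : α} (h : H.IsLegalSeq us)
    (hv : v ∈ H.verts) (hv' : v ∉ H.state us) : H.IsLegalSeq (us ++ [v]) := by
  intro i
  rcases lt_or_ge i.1 us.length with hi | hi
  · have hget : (us ++ [v]).get i = us.get ⟨i.1, hi⟩ := by
      simp [List.getElem_append_left hi]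
    rw [hget, List.take_append_of_le_length hi.le]
    exact h ⟨i.1, hi⟩
  · have hi : i.1 = us.length := by
      have := i.2
      simp only [List.length_append, List.length_singleton] at this
      omega
    have hget : (us ++ [v]).get i = v := by simp [hi]
    rw [hget, hi, List.take_left]
    exact ⟨hv, hv'⟩

lemma IsLegalSeq.isBurningSeq {us : List α} (h : H.IsLegalSeq us)
    (hcover : H.verts ⊆ H.state us) : H.IsBurningSeq us :=
  ⟨h, (state_subset_verts fun _ => h.mem_verts).antisymm hcover⟩

lemma burn_le_length {us : List α} (h : H.IsBurningSeq us) : H.burn ≤ us.length :=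
  Nat.sInf_le ⟨us, h, rfl⟩

/-- `f` is one round of some propagation rule that spreads, inside `V(G)`, no faster than that of
`G`; taking `f := id` gives a burning sequence of any hypergraph. -/
lemma exists_isLegalSeq_of_dominated (f : Finset α → Finset α)
    (hf : ∀ S F, S ∩ G.verts ⊆ F → f S ∩ G.verts ⊆ G.step F) (us : List α) :
    ∃ vs, G.IsLegalSeq vs ∧ vs.length ≤ us.length ∧
      us.foldl (fun S u => insert u (f S)) ∅ ∩ G.verts ⊆ G.state vs := by
  induction us using List.reverseRecOn with
  | nil => exact ⟨[], G.isLegalSeq_nil, le_rfl, by simp⟩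
  | append_singleton us u ih =>
    obtain ⟨vs, hvs, hlen, hsim⟩ := ih
    rw [List.foldl_append, List.foldl_cons, List.foldl_nil]
    by_cases hdone : G.verts ⊆ G.state vs
    · refine ⟨vs, hvs, ?_, inter_subset_right.trans hdone⟩
      simp only [List.length_append, List.length_singleton]
      omega
    obtain ⟨w, hw, hwS, hu⟩ : ∃ w ∈ G.verts, w ∉ G.state vs ∧
        (u ∈ G.verts → u ∈ insert w (G.state vs)) := by
      by_cases hu : u ∈ G.verts ∧ u ∉ G.state vs
      · exact ⟨u, hu.1, hu.2, fun _ => mem_insert_self _ _⟩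
      · obtain ⟨w, hw, hwS⟩ := not_subset.1 hdone
        exact ⟨w, hw, hwS, fun huG => mem_insert_of_mem (by tauto)⟩
    refine ⟨vs ++ [w], hvs.append_singleton hw hwS, by simpa, ?_⟩
    rw [state_append_singleton]
    intro x hx
    obtain ⟨hx | hx, hxG⟩ := And.imp_left mem_insert.1 (mem_inter.1 hx)
    · subst hx
      exact insert_subset_insert _ (G.subset_step _) (hu hxG)
    · exact mem_insert_of_mem (hf _ _ hsim (mem_inter.2 ⟨hx, hxG⟩))

lemma mem_foldl_insert {us : List α} {u : α} (hu : u ∈ us) :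
    u ∈ us.foldl (fun S v => insert v S) (∅ : Finset α) := by
  induction us using List.reverseRecOn with
  | nil => simp at hu
  | append_singleton us v ih =>
    rw [List.foldl_append, List.foldl_cons, List.foldl_nil, mem_insert]
    rcases List.mem_append.1 hu with hu | hu
    · exact Or.inr (ih hu)
    · exact Or.inl (List.mem_singleton.1 hu)

lemma exists_isBurningSeq (H : BurnHypergraph α) : ∃ us, H.IsBurningSeq us := by
  obtain ⟨vs, hvs, -, hcover⟩ := exists_isLegalSeq_of_dominated (G := H) id
    (fun S F hSF => hSF.trans (H.subset_step F)) H.verts.toList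
  refine ⟨vs, hvs.isBurningSeq fun v hv => hcover (mem_inter.2 ⟨?_, hv⟩)⟩
  exact mem_foldl_insert (mem_toList.2 hv)

lemma exists_isBurningSeq_length_eq_burn (H : BurnHypergraph α) :
    ∃ us, H.IsBurningSeq us ∧ us.length = H.burn := by
  obtain ⟨us, hus⟩ := H.exists_isBurningSeq
  exact Nat.sInf_mem (s := {n | ∃ us : List α, H.IsBurningSeq us ∧ us.length = n})
    ⟨us.length, us, hus, rfl⟩

lemma step_inter_verts_subset_step
    (hedge : ∀ e ∈ H.edges, e ∩ G.verts ∈ G.edges ∧ 2 ≤ (e ∩ G.verts).card)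
    {S F : Finset α} (hSF : S ∩ G.verts ⊆ F) : H.step S ∩ G.verts ⊆ G.step F := by
  intro x hx
  obtain ⟨hxS | hxP, hxG⟩ := And.imp_left mem_union.1 (mem_inter.1 hx)
  · exact G.subset_step F (hSF (mem_inter.2 ⟨hxS, hxG⟩))
  obtain ⟨-, e, he, -, hxe, hsub⟩ := mem_filter.1 hxP
  refine mem_union_right _ (mem_filter.2 ⟨hxG, e ∩ G.verts, (hedge e he).1, (hedge e he).2,
    mem_inter.2 ⟨hxe, hxG⟩, fun y hy => hSF ?_⟩)
  obtain ⟨hy, hyx⟩ := mem_sdiff.1 hy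
  exact mem_inter.2 ⟨hsub (mem_sdiff.2 ⟨(mem_inter.1 hy).1, hyx⟩), (mem_inter.1 hy).2⟩

theorem burn_le_burn_of_inter_mem_edges (hsub : G.verts ⊆ H.verts)
    (hedge : ∀ e ∈ H.edges, e ∩ G.verts ∈ G.edges ∧ 2 ≤ (e ∩ G.verts).card) :
    G.burn ≤ H.burn := by
  obtain ⟨us, hus, hlen⟩ := H.exists_isBurningSeq_length_eq_burn
  obtain ⟨vs, hvs, hvlen, hsim⟩ := exists_isLegalSeq_of_dominated H.step
    (fun _ _ => step_inter_verts_subset_step hedge) us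
  have hcover : G.verts ⊆ G.state vs :=
    (subset_inter (hsub.trans hus.2.ge) subset_rfl).trans hsim
  calc G.burn ≤ vs.length := burn_le_length (hvs.isBurningSeq hcover)
    _ ≤ H.burn := hlen ▸ hvlen

end BurnHypergraph

theorem burn_weak_induced_le_general {α : Type*} [DecidableEq α]
    (H G : BurnHypergraph α) (V' : Finset α) (hV' : V' ⊆ H.verts)
    (hGv : G.verts = V')
    (hGe : G.edges = (H.edges.image (fun e => e ∩ V')).filter (fun e => e.Nonempty))
    (hmeet : ∀ e ∈ H.edges, 2 ≤ (e ∩ V').card) :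
    G.burn ≤ H.burn := by
  subst hGv
  refine BurnHypergraph.burn_le_burn_of_inter_mem_edges hV' fun e he => ⟨?_, hmeet e he⟩
  rw [hGe, mem_filter]
  exact ⟨mem_image_of_mem _ he, card_pos.1 (by linarith [hmeet e he])⟩

theorem burn_weak_induced_le {α : Type*} [DecidableEq α]
    (H G : BurnHypergraph α) (V' : Finset α) (hV' : V' ⊆ H.verts)
    (hGv : G.verts = V')
    (hGe : G.edges = (H.edges.image (fun e => e ∩ V')).filter (fun e => e.Nonempty))
    (hcard : G.edges.card = H.edges.card)
    (hmeet : ∀ e ∈ H.edges, 2 ≤ (e ∩ V').card) :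
    G.burn ≤ H.burn :=
  burn_weak_induced_le_general H G V' hV' hGv hGe hmeet
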